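/- Let n ≥ 1 and write P_n = Y^{2^n} + Σ_{k=1}^{2^n} B_k^{(n)} Y^{2^n − k} with coefficients B_k^{(n)} ∈ ℚ[T,U_1,…,U_n]. Then for every 1 ≤ k ≤ 2^n the congruence B_k^{(n)} ≡ (−1)^k (β_k^{(n)} + T·L_k^{(n)}) modulo T² holds in ℚ[T,U_1,…,U_n], i.e., B_k^{(n)} − (−1)^k(β_k^{(n)} + T·L_k^{(n)}) belongs to the ideal generated by T², where β_k^{(n)} := Σ_{0 ≤ j_1 < ⋯ < j_k ≤ 2^n−1} j_1⋯j_k. -/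

import Mathlib

open scoped BigOperators

/-- The polynomial `P_n = ∏_{j=0}^{2^n−1} (Y − (j + T·∏_i U_i^{[j]_i}))` in
`ℚ[T,U_1,…,U_n][Y]`, where `T` is the variable of index `0` and `U_i` the
variable of index `i` (`1 ≤ i ≤ n`), and `[j]_i` is the `i`-th binary digit
of `j`. -/
noncomputable def Pn (n : ℕ) : Polynomial (MvPolynomial (Fin (n + 1)) ℚ) :=
  ∏ j ∈ Finset.range (2 ^ n),
    (Polynomial.X -
      Polynomial.C
        (MvPolynomial.C (j : ℚ) +
          MvPolynomial.X 0 * ∏ i : Fin n, MvPolynomial.X i.succ ^ (Nat.testBit j i.val).toNat))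

/-- The polynomial `L_k^{(n)}` of `ℚ[U_1,…,U_n]`, viewed inside
`ℚ[T,U_1,…,U_n]`. -/
noncomputable def LpolyT (n k : ℕ) : MvPolynomial (Fin (n + 1)) ℚ :=
  ∑ s ∈ (Finset.range (2 ^ n)).powersetCard k,
    ∑ h ∈ s,
      MvPolynomial.C (∏ r ∈ s.erase h, (r : ℚ)) *
        ∏ i : Fin n, MvPolynomial.X i.succ ^ (Nat.testBit h i.val).toNat

/-- `β_k^{(n)} = Σ_{0 ≤ j_1 < ⋯ < j_k ≤ 2^n−1} j_1⋯j_k`. -/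
def betaCoeff (n k : ℕ) : ℚ :=
  ∑ s ∈ (Finset.range (2 ^ n)).powersetCard k, ∏ r ∈ s, (r : ℚ)

/-- Generic first-order expansion of a product modulo `T²`. -/
lemma prod_linear_mod_sq {R : Type*} [CommRing R] (T : R) (f g : ℕ → R)
    (s : Finset ℕ) :
    T ^ 2 ∣ ∏ j ∈ s, (f j + T * g j) -
      (∏ j ∈ s, f j + T * ∑ h ∈ s, (∏ r ∈ s.erase h, f r) * g h) := by
  classical
  induction s using Finset.induction_on with
  | empty => simp
  | @insert a s ha ih =>
    obtain ⟨c, hc⟩ := ih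
    rw [Finset.prod_insert ha, Finset.prod_insert ha, Finset.sum_insert ha,
      Finset.erase_insert ha]
    have hrw : ∀ h ∈ s, ∏ r ∈ (insert a s).erase h, f r =
        f a * ∏ r ∈ s.erase h, f r := by
      intro h hh
      rw [Finset.erase_insert_of_ne (by rintro rfl; exact ha hh),
        Finset.prod_insert (by simp [ha])]
    rw [Finset.sum_congr rfl (fun h hh => by rw [hrw h hh])]
    have hS : ∑ h ∈ s, (f a * ∏ r ∈ s.erase h, f r) * g h =
        f a * ∑ h ∈ s, (∏ r ∈ s.erase h, f r) * g h := by
      rw [Finset.mul_sum]; exact Finset.sum_congr rfl fun _ _ => by ring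
    rw [hS]
    exact ⟨g a * (∑ h ∈ s, (∏ r ∈ s.erase h, f r) * g h) + (f a + T * g a) * c,
      by linear_combination (f a + T * g a) * hc⟩

/-- Writing `P_n = Y^{2^n} + Σ_{k=1}^{2^n} B_k^{(n)} Y^{2^n−k}`, one has
`B_k^{(n)} ≡ (−1)^k (β_k^{(n)} + T·L_k^{(n)})` modulo `T²` for `1 ≤ k ≤ 2^n`. -/
theorem coeff_Pn_congruent_mod_T_sq (n k : ℕ) (hn : 1 ≤ n) (hk1 : 1 ≤ k)
    (hk2 : k ≤ 2 ^ n) :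
    (Pn n).coeff (2 ^ n - k) -
        (-1) ^ k * (MvPolynomial.C (betaCoeff n k) + MvPolynomial.X 0 * LpolyT n k)
      ∈ Ideal.span {(MvPolynomial.X 0 : MvPolynomial (Fin (n + 1)) ℚ) ^ 2} := by
  classical
  set T : MvPolynomial (Fin (n + 1)) ℚ := MvPolynomial.X 0 with hT
  set m : ℕ → MvPolynomial (Fin (n + 1)) ℚ := fun j =>
    ∏ i : Fin n, MvPolynomial.X i.succ ^ (Nat.testBit j i.val).toNat with hm
  set f : ℕ → MvPolynomial (Fin (n + 1)) ℚ := fun j => MvPolynomial.C (j : ℚ) with hf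
  rw [Ideal.mem_span_singleton]
  -- compute the coefficient
  have hcoeff : (Pn n).coeff (2 ^ n - k) =
      (-1) ^ k * ∑ t ∈ (Finset.range (2 ^ n)).powersetCard k,
        ∏ j ∈ t, (f j + T * m j) := by
    have h1 : Pn n = ∏ j ∈ Finset.range (2 ^ n),
        (Polynomial.X + Polynomial.C (-(f j + T * m j))) := by
      unfold Pn
      simp [sub_eq_add_neg, hf, hm, hT]
    rw [h1, Finset.prod_X_add_C_coeff _ _ (by simp [Nat.sub_le])]
    rw [Finset.card_range, Nat.sub_sub_self hk2]
    rw [Finset.mul_sum]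
    refine Finset.sum_congr rfl fun t ht => ?_
    have hcard : t.card = k := (Finset.mem_powersetCard.mp ht).2
    calc ∏ i ∈ t, -(f i + T * m i)
        = ∏ i ∈ t, (-1) * (f i + T * m i) :=
          Finset.prod_congr rfl fun i _ => (neg_one_mul _).symm
      _ = (-1) ^ k * ∏ j ∈ t, (f j + T * m j) := by
          rw [Finset.prod_mul_distrib, Finset.prod_const, hcard]
  rw [hcoeff]
  have hsum : ∀ t ∈ (Finset.range (2 ^ n)).powersetCard k,
      T ^ 2 ∣ ∏ j ∈ t, (f j + T * m j) -
        (∏ j ∈ t, f j + T * ∑ h ∈ t, (∏ r ∈ t.erase h, f r) * m h) :=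
    fun t _ => prod_linear_mod_sq T f m t
  obtain ⟨c, hc⟩ := Finset.dvd_sum hsum
  rw [Finset.sum_sub_distrib] at hc
  have hbeta : (MvPolynomial.C (betaCoeff n k) : MvPolynomial (Fin (n + 1)) ℚ) +
      T * LpolyT n k =
      ∑ t ∈ (Finset.range (2 ^ n)).powersetCard k,
        (∏ j ∈ t, f j + T * ∑ h ∈ t, (∏ r ∈ t.erase h, f r) * m h) := by
    rw [Finset.sum_add_distrib, ← Finset.mul_sum]
    refine congrArg₂ (· + ·) ?_ ?_
    · rw [betaCoeff, map_sum]
      exact Finset.sum_congr rfl fun t _ => by rw [map_prod]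
    · refine congrArg (T * ·) ?_
      rw [LpolyT]
      refine Finset.sum_congr rfl fun t _ => Finset.sum_congr rfl fun h _ => ?_
      rw [map_prod]
  rw [hbeta]
  exact ⟨(-1) ^ k * c, by rw [← mul_sub, hc]; ring⟩
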